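/- arXiv:1208.1434 — 3 statements merged into one kernel-verified Lean document; each statement's English description precedes it below -/
import Mathlib

section
/- Let α be a real number and (c_n)_{n≥1} a sequence of positive integers, with q_n, a_n, A_n the data of the generalized alternating-Sylvester expansion of α. For every n ≥ 1 with A_{n+1} ≠ 0, one has a_{n+1} + 1 > (c_{n+1}/c_n) · a_n · (a_n + 1). -/
open Filter Topology

/-- The rational value `c/⌊c/x⌋` used at each step (0 if `x = 0`). -/
noncomputable def gasQaux (cn : ℕ) (x : ℝ) : ℝ :=
  if x = 0 then 0 else (cn : ℝ) / (⌊(cn : ℝ) / x⌋ : ℝ)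

/-- `gasA c α n` is `A_n` of the generalized alternating-Sylvester expansion of `α`
(for `n ≥ 1`; the value at `0` is a dummy). `A_1 = α - ⌊α⌋`, `A_{n+1} = q_n - A_n`. -/
noncomputable def gasA (c : ℕ → ℕ) (α : ℝ) : ℕ → ℝ
  | 0 => 0
  | 1 => α - ⌊α⌋
  | n + 2 => gasQaux (c (n + 1)) (gasA c α (n + 1)) - gasA c α (n + 1)

/-- `gasQ c α n` is `q_n`: `q_0 = ⌊α⌋`; for `n ≥ 1`, `q_n = c_n / a_n` if `A_n ≠ 0`, else `0`. -/
noncomputable def gasQ (c : ℕ → ℕ) (α : ℝ) : ℕ → ℝ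
  | 0 => (⌊α⌋ : ℤ)
  | n + 1 => gasQaux (c (n + 1)) (gasA c α (n + 1))

/-- `gasa c α n` is `a_n = ⌊c_n / A_n⌋` (meaningful when `A_n ≠ 0`). -/
noncomputable def gasa (c : ℕ → ℕ) (α : ℝ) (n : ℕ) : ℤ :=
  ⌊(c n : ℝ) / gasA c α n⌋

/-!
With `a = ⌊c / x⌋` one has `c / (a + 1) < x ≤ c / a`, so the next remainder `c / a - x` lies in
`[0, c / (a (a + 1)))`. All remainders `A_n` lie in `[0, 1)`, and then
`a_{n+1} + 1 > c_{n+1} / A_{n+1} > c_{n+1} a_n (a_n + 1) / c_n`.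
-/

section FloorDiv

variable {K : Type*} [Field K] [LinearOrder K] [IsStrictOrderedRing K] [FloorRing K] {c x : K}

theorem le_div_floor_div (hx : 0 < x) (ha : 0 < ⌊c / x⌋) : x ≤ c / ⌊c / x⌋ := by
  have ha' : (0 : K) < ⌊c / x⌋ := Int.cast_pos.mpr ha
  rw [le_div_iff₀ ha', ← le_div_iff₀' hx]
  exact Int.floor_le _

theorem div_floor_div_sub_lt (hx : 0 < x) (ha : 0 < ⌊c / x⌋) :
    c / ⌊c / x⌋ - x < c / (⌊c / x⌋ * (⌊c / x⌋ + 1)) := by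
  set a : K := (⌊c / x⌋ : K)
  have ha' : 0 < a := Int.cast_pos.mpr ha
  have hlt : c / (a + 1) < x := by
    rw [div_lt_iff₀ (by positivity), ← div_lt_iff₀' hx]
    exact Int.lt_floor_add_one _
  calc c / a - x < c / a - c / (a + 1) := by linarith
    _ = c / (a * (a + 1)) := by field_simp; ring

theorem natCast_le_floor_div (hx0 : 0 < x) (hx1 : x ≤ 1) (n : ℕ) : (n : ℤ) ≤ ⌊(n : K) / x⌋ := by
  rw [Int.le_floor, Int.cast_natCast]
  exact le_div_self n.cast_nonneg hx0 hx1

end FloorDiv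

variable {c : ℕ → ℕ} {α : ℝ} {n : ℕ}

theorem gasQaux_of_ne_zero {cn : ℕ} {x : ℝ} (hx : x ≠ 0) :
    gasQaux cn x = cn / ⌊(cn : ℝ) / x⌋ :=
  if_neg hx

theorem gasA_succ (hn : 1 ≤ n) :
    gasA c α (n + 1) = gasQaux (c n) (gasA c α n) - gasA c α n := by
  obtain ⟨k, rfl⟩ := Nat.exists_eq_add_of_le' hn
  rfl

theorem gasA_ne_zero_of_succ (hn : 1 ≤ n) (h : gasA c α (n + 1) ≠ 0) : gasA c α n ≠ 0 := by
  rintro h0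
  simp [gasA_succ hn, h0, gasQaux] at h

theorem gasQaux_sub_mem_Ico {cn : ℕ} (hcn : 0 < cn) {x : ℝ} (hx : x ∈ Set.Ico 0 1) :
    gasQaux cn x - x ∈ Set.Ico 0 1 := by
  obtain ⟨hx0, hx1⟩ := hx
  rcases hx0.eq_or_lt with rfl | hx0
  · simp [gasQaux]
  have hca := natCast_le_floor_div hx0 hx1.le cn
  have ha : 0 < ⌊(cn : ℝ) / x⌋ := by omega
  rw [gasQaux_of_ne_zero hx0.ne']
  refine ⟨sub_nonneg.mpr (le_div_floor_div hx0 ha), ?_⟩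
  have hq : (cn : ℝ) / ⌊(cn : ℝ) / x⌋ ≤ 1 :=
    div_le_one_of_le₀ (by exact_mod_cast hca) (by positivity)
  linarith

theorem gasA_mem_Ico (hc : ∀ n, 1 ≤ n → 0 < c n) (hn : 1 ≤ n) : gasA c α n ∈ Set.Ico 0 1 := by
  induction n, hn using Nat.le_induction with
  | base => exact ⟨Int.fract_nonneg α, Int.fract_lt_one α⟩
  | succ n hn ih =>
    rw [gasA_succ hn]
    exact gasQaux_sub_mem_Ico (hc n hn) ih

theorem gasa_pos (hc : ∀ n, 1 ≤ n → 0 < c n) (hn : 1 ≤ n) (hA : gasA c α n ≠ 0) :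
    0 < gasa c α n := by
  obtain ⟨hA0, hA1⟩ := gasA_mem_Ico (α := α) hc hn
  have := natCast_le_floor_div (lt_of_le_of_ne hA0 hA.symm) hA1.le (c n)
  have := hc n hn
  unfold gasa
  omega

theorem gasA_succ_lt (hc : ∀ n, 1 ≤ n → 0 < c n) (hn : 1 ≤ n) (hA : gasA c α n ≠ 0) :
    gasA c α (n + 1) < c n / (gasa c α n * (gasa c α n + 1)) := by
  have hA0 : 0 < gasA c α n := lt_of_le_of_ne (gasA_mem_Ico hc hn).1 hA.symm
  rw [gasA_succ hn, gasQaux_of_ne_zero hA]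
  exact div_floor_div_sub_lt hA0 (gasa_pos hc hn hA)

/-- For every $n \ge 1$ with $A_{n+1} \neq 0$,
$a_{n+1} + 1 > (c_{n+1}/c_n) a_n (a_n + 1)$. -/
theorem gas_an_growth (c : ℕ → ℕ) (hc : ∀ n, 1 ≤ n → 0 < c n) (α : ℝ) :
    ∀ n, 1 ≤ n → gasA c α (n + 1) ≠ 0 →
      ((c (n + 1) : ℝ) / (c n : ℝ)) * (gasa c α n : ℝ) * ((gasa c α n : ℝ) + 1) <
        (gasa c α (n + 1) : ℝ) + 1 := by
  intro n hn hne
  have hA : gasA c α n ≠ 0 := gasA_ne_zero_of_succ hn hne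
  have hA' : 0 < gasA c α (n + 1) := lt_of_le_of_ne (gasA_mem_Ico hc (by omega)).1 hne.symm
  have hcn : (0 : ℝ) < c n := by exact_mod_cast hc n hn
  have hcn' : (0 : ℝ) < c (n + 1) := by exact_mod_cast hc (n + 1) (by omega)
  have ha : (0 : ℝ) < gasa c α n := by exact_mod_cast gasa_pos hc hn hA
  calc (c (n + 1) : ℝ) / c n * gasa c α n * (gasa c α n + 1)
      = c (n + 1) / (c n / (gasa c α n * (gasa c α n + 1))) := by field_simp
    _ < c (n + 1) / gasA c α (n + 1) := div_lt_div_of_pos_left hcn' hA' (gasA_succ_lt hc hn hA)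
    _ < gasa c α (n + 1) + 1 := Int.lt_floor_add_one _
end

section
/- Let α be a real number and (c_n)_{n≥1} a sequence of positive integers, with q_n the data of the generalized alternating-Sylvester expansion of α. For every n ≥ 1, q_n ≥ q_{n+1}; moreover, if q_{n+1} ≠ 0 then q_n > q_{n+1}. -/
open Filter Topology

lemma gasQaux_bounds (cn : ℕ) (hcn : 1 ≤ cn) (A : ℝ) (hA0 : 0 < A) (hA1 : A < 1) :
    A ≤ gasQaux cn A ∧ gasQaux cn A < 2 * A := by
  rw [gasQaux, if_neg (ne_of_gt hA0)]
  set a : ℤ := ⌊(cn : ℝ) / A⌋ with ha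
  have hc : (1 : ℝ) ≤ cn := by exact_mod_cast hcn
  have hdiv : (1 : ℝ) ≤ (cn : ℝ) / A := by rw [le_div_iff₀ hA0]; nlinarith
  have ha1 : (1 : ℤ) ≤ a := Int.le_floor.mpr (by exact_mod_cast hdiv)
  have har : (1 : ℝ) ≤ (a : ℝ) := by exact_mod_cast ha1
  have hapos : (0 : ℝ) < (a : ℝ) := by linarith
  have h1 : (a : ℝ) * A ≤ cn := (le_div_iff₀ hA0).mp (Int.floor_le _)
  have h2 : (cn : ℝ) < ((a : ℝ) + 1) * A := (div_lt_iff₀ hA0).mp (Int.lt_floor_add_one _)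
  constructor
  · rw [le_div_iff₀ hapos]; linarith
  · rw [div_lt_iff₀ hapos]; nlinarith

lemma gasA_bounds (c : ℕ → ℕ) (hc : ∀ n, 1 ≤ n → 0 < c n) (α : ℝ) :
    ∀ n, 1 ≤ n → 0 ≤ gasA c α n ∧ gasA c α n < 1 := by
  intro n
  induction n with
  | zero => omega
  | succ m ih =>
    intro _
    match m, ih with
    | 0, _ =>
      show 0 ≤ α - ⌊α⌋ ∧ α - ⌊α⌋ < 1
      constructor
      · linarith [Int.floor_le α]
      · linarith [Int.lt_floor_add_one α]
    | k + 1, ih =>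
      obtain ⟨h0, h1⟩ := ih (by omega)
      show 0 ≤ gasQaux (c (k + 1)) (gasA c α (k + 1)) - gasA c α (k + 1) ∧
        gasQaux (c (k + 1)) (gasA c α (k + 1)) - gasA c α (k + 1) < 1
      by_cases hA : gasA c α (k + 1) = 0
      · rw [hA, gasQaux, if_pos rfl]; norm_num
      · have hpos : 0 < gasA c α (k + 1) := lt_of_le_of_ne h0 (Ne.symm hA)
        obtain ⟨hb1, hb2⟩ := gasQaux_bounds (c (k + 1)) (hc (k + 1) (by omega)) _ hpos h1
        constructor <;> linarith

/-- For every $n \ge 1$, $q_n \ge q_{n+1}$; moreover if $q_{n+1} \neq 0$ then $q_n > q_{n+1}$. -/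
theorem gas_qn_antitone (c : ℕ → ℕ) (hc : ∀ n, 1 ≤ n → 0 < c n) (α : ℝ) :
    ∀ n, 1 ≤ n →
      gasQ c α (n + 1) ≤ gasQ c α n ∧
        (gasQ c α (n + 1) ≠ 0 → gasQ c α (n + 1) < gasQ c α n) := by
  rintro (_ | m) hn
  · omega
  have hqA : gasQ c α (m + 1) = gasQaux (c (m + 1)) (gasA c α (m + 1)) := rfl
  have hqA' : gasQ c α (m + 2) = gasQaux (c (m + 2)) (gasA c α (m + 2)) := rfl
  have hA' : gasA c α (m + 2) = gasQaux (c (m + 1)) (gasA c α (m + 1)) - gasA c α (m + 1) := rfl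
  obtain ⟨h0, h1⟩ := gasA_bounds c hc α (m + 1) (by omega)
  by_cases hA : gasA c α (m + 1) = 0
  · have hz : gasQ c α (m + 1) = 0 := by rw [hqA, gasQaux, if_pos hA]
    have hz2 : gasA c α (m + 2) = 0 := by rw [hA', hA, gasQaux, if_pos rfl]; ring
    have hz3 : gasQ c α (m + 2) = 0 := by rw [hqA', gasQaux, if_pos hz2]
    rw [hz, hz3]; exact ⟨le_refl _, fun h => absurd rfl h⟩
  · have hpos : 0 < gasA c α (m + 1) := lt_of_le_of_ne h0 (Ne.symm hA)
    obtain ⟨hb1, hb2⟩ := gasQaux_bounds (c (m + 1)) (hc (m + 1) (by omega)) _ hpos h1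
    rw [hqA] at *
    by_cases hA2 : gasA c α (m + 2) = 0
    · have hz3 : gasQ c α (m + 2) = 0 := by rw [hqA', gasQaux, if_pos hA2]
      rw [hz3]
      exact ⟨by linarith, fun h => absurd rfl h⟩
    · obtain ⟨h0', h1'⟩ := gasA_bounds c hc α (m + 2) (by omega)
      have hpos' : 0 < gasA c α (m + 2) := lt_of_le_of_ne h0' (Ne.symm hA2)
      obtain ⟨hb1', hb2'⟩ := gasQaux_bounds (c (m + 2)) (hc (m + 2) (by omega)) _ hpos' h1'
      rw [hqA']
      have hlt : gasQaux (c (m + 2)) (gasA c α (m + 2)) < gasQ c α (m + 1) := by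
        have := hA'.symm.le
        have := hA'.le
        show _ < gasQaux (c (m + 1)) (gasA c α (m + 1))
        linarith
      exact ⟨le_of_lt hlt, fun _ => hlt⟩
end

section
/- Let α be a real number and (c_n)_{n≥1} a sequence of positive integers, with q_n, A_n the data of the generalized alternating-Sylvester expansion of α. For every n ≥ 1, the tail series Σ_{k=n}^∞ (−1)^{k−1} q_k converges and (−1)^{n−1} · Σ_{k=n}^∞ (−1)^{k−1} q_k = A_n. -/
open Filter Topology

/-!
Since `q_n = A_n + A_{n+1}` for `n ≥ 1`, the partial sums of the alternating tail telescope to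
`(-1)^(n-1) (A_n - (-1)^N A_{n+N})`, so everything reduces to `A_n → 0`. With `a = ⌊c/x⌋ ≥ c`,
the step `x ↦ c/a - x` satisfies `0 ≤ c/a - x ≤ 1 - x` and `(c/a - x) a < x` on `(0, 1]`: it maps
`[0, 1]` into `[0, 1/2]`, and once `x ≤ 1/2` we have `a ≥ 2`, so it halves `x`.
-/

theorem tendsto_sum_range_neg_one_pow_mul_add_succ {R : Type*} [NormedDivisionRing R]
    {f : ℕ → R} (hf : Tendsto f atTop (𝓝 0)) :
    Tendsto (fun N => ∑ k ∈ Finset.range N, (-1) ^ k * (f k + f (k + 1))) atTop (𝓝 (f 0)) := by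
  set g : ℕ → R := fun k => (-1) ^ k * f k
  have hg : Tendsto g atTop (𝓝 0) := by
    rw [tendsto_zero_iff_norm_tendsto_zero] at hf ⊢
    simpa [g] using hf
  have telescope (N : ℕ) :
      ∑ k ∈ Finset.range N, (-1) ^ k * (f k + f (k + 1)) = g 0 - g N := by
    rw [← Finset.sum_range_sub' g N]
    refine Finset.sum_congr rfl fun k _ => ?_
    simp only [g, pow_succ]
    noncomm_ring
  simp_rw [telescope]
  simpa [g] using tendsto_const_nhds.sub hg

theorem one_le_floor_div {x y : ℝ} (hx : 0 < x) (hxy : x ≤ y) : 1 ≤ ⌊y / x⌋ := by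
  rwa [Int.le_floor, Int.cast_one, one_le_div hx]

section Step

variable {cn : ℕ} {x : ℝ}

theorem gasQaux_sub_self_nonneg (hx0 : 0 ≤ x) (hxc : x ≤ cn) : 0 ≤ gasQaux cn x - x := by
  rcases hx0.eq_or_lt with rfl | hx
  · simp [gasQaux]
  have ha : (0 : ℝ) < ⌊(cn : ℝ) / x⌋ := by exact_mod_cast one_le_floor_div hx hxc
  rw [gasQaux, if_neg hx.ne', sub_nonneg, le_div_iff₀ ha, ← le_div_iff₀' hx]
  exact Int.floor_le _

theorem gasQaux_le_one (hc : 0 < cn) (hx0 : 0 ≤ x) (hx1 : x ≤ 1) : gasQaux cn x ≤ 1 := by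
  rcases hx0.eq_or_lt with rfl | hx
  · simp [gasQaux]
  have hc1 : (1 : ℝ) ≤ cn := Nat.one_le_cast.mpr hc
  have hca : (cn : ℝ) ≤ ⌊(cn : ℝ) / x⌋ := by
    rw [← Int.cast_natCast, Int.cast_le, Int.le_floor, Int.cast_natCast, le_div_iff₀ hx]
    nlinarith
  rw [gasQaux, if_neg hx.ne', div_le_one (by linarith)]
  exact hca

theorem gasQaux_sub_self_mul_floor_lt (hx : 0 < x) (hxc : x ≤ cn) :
    (gasQaux cn x - x) * ⌊(cn : ℝ) / x⌋ < x := by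
  have ha : (0 : ℝ) < ⌊(cn : ℝ) / x⌋ := by exact_mod_cast one_le_floor_div hx hxc
  have hlt : (cn : ℝ) < (⌊(cn : ℝ) / x⌋ + 1) * x := by
    rw [← div_lt_iff₀ hx]
    exact Int.lt_floor_add_one _
  rw [gasQaux, if_neg hx.ne', sub_mul, div_mul_cancel₀ _ ha.ne']
  linarith

theorem gasQaux_sub_self_le_half (hc : 0 < cn) (hx0 : 0 ≤ x) (hx1 : x ≤ 1) :
    gasQaux cn x - x ≤ 1 / 2 := by
  rcases hx0.eq_or_lt with rfl | hx
  · simp [gasQaux]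
  have hxc : x ≤ cn := hx1.trans (Nat.one_le_cast.mpr hc)
  have ha : (1 : ℝ) ≤ ⌊(cn : ℝ) / x⌋ := by exact_mod_cast one_le_floor_div hx hxc
  have hlt : gasQaux cn x - x < x :=
    (le_mul_of_one_le_right (gasQaux_sub_self_nonneg hx0 hxc) ha).trans_lt
      (gasQaux_sub_self_mul_floor_lt hx hxc)
  linarith [gasQaux_le_one hc hx0 hx1]

theorem gasQaux_sub_self_le_half_self (hc : 0 < cn) (hx0 : 0 ≤ x) (hx1 : x ≤ 1 / 2) :
    gasQaux cn x - x ≤ x / 2 := by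
  rcases hx0.eq_or_lt with rfl | hx
  · simp [gasQaux]
  have hc1 : (1 : ℝ) ≤ cn := Nat.one_le_cast.mpr hc
  have hxc : x ≤ cn := by linarith
  have ha : (2 : ℝ) ≤ ⌊(cn : ℝ) / x⌋ := by
    have : (2 : ℤ) ≤ ⌊(cn : ℝ) / x⌋ := by
      rw [Int.le_floor, Int.cast_ofNat, le_div_iff₀ hx]
      linarith
    exact_mod_cast this
  have hlt : (gasQaux cn x - x) * 2 < x :=
    (mul_le_mul_of_nonneg_left ha (gasQaux_sub_self_nonneg hx0 hxc)).trans_lt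
      (gasQaux_sub_self_mul_floor_lt hx hxc)
  linarith

end Step

section Expansion

variable {c : ℕ → ℕ} {α : ℝ}

theorem gasQ_succ_eq_add (n : ℕ) :
    gasQ c α (n + 1) = gasA c α (n + 1) + gasA c α (n + 2) := by
  rw [gasQ, gasA]
  ring

variable (hc : ∀ n, 1 ≤ n → 0 < c n)
include hc

theorem gasA_mem_Icc : ∀ n, gasA c α n ∈ Set.Icc 0 1
  | 0 => by simp [gasA]
  | 1 => ⟨Int.fract_nonneg α, (Int.fract_lt_one α).le⟩
  | n + 2 => by
    obtain ⟨h0, h1⟩ := gasA_mem_Icc (n + 1)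
    have hcn := hc (n + 1) n.succ_pos
    exact ⟨gasQaux_sub_self_nonneg h0 (h1.trans (Nat.one_le_cast.mpr hcn)),
      (gasQaux_sub_self_le_half hcn h0 h1).trans (by norm_num)⟩

theorem gasA_add_two_le_half (n : ℕ) : gasA c α (n + 2) ≤ 1 / 2 :=
  have h := gasA_mem_Icc hc (n + 1)
  gasQaux_sub_self_le_half (hc (n + 1) n.succ_pos) h.1 h.2

theorem gasA_add_two_le_geometric : ∀ n, gasA c α (n + 2) ≤ (1 / 2) ^ (n + 1)
  | 0 => by simpa using gasA_add_two_le_half hc 0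
  | n + 1 => calc
    gasA c α (n + 3) ≤ gasA c α (n + 2) / 2 :=
      gasQaux_sub_self_le_half_self (hc (n + 2) (by omega)) (gasA_mem_Icc hc (n + 2)).1
        (gasA_add_two_le_half hc n)
    _ ≤ (1 / 2) ^ (n + 1) / 2 := by gcongr; exact gasA_add_two_le_geometric n
    _ = (1 / 2) ^ (n + 2) := by ring

theorem tendsto_gasA_atTop : Tendsto (gasA c α) atTop (𝓝 0) := by
  rw [← tendsto_add_atTop_iff_nat 2]
  refine squeeze_zero (fun n => (gasA_mem_Icc hc (n + 2)).1) (gasA_add_two_le_geometric hc) ?_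
  exact (tendsto_pow_atTop_nhds_zero_of_lt_one (by norm_num) (by norm_num)).comp
    (tendsto_add_atTop_nat 1)

end Expansion

/-- For every $n \ge 1$, the tail series $\sum_{k=n}^\infty (-1)^{k-1} q_k$ converges and
$(-1)^{n-1} \sum_{k=n}^\infty (-1)^{k-1} q_k = A_n$. -/
theorem gas_tail_sum_eq_An (c : ℕ → ℕ) (hc : ∀ n, 1 ≤ n → 0 < c n) (α : ℝ) :
    ∀ n, 1 ≤ n → ∃ S : ℝ,
      Tendsto (fun N : ℕ => ∑ k ∈ Finset.range N, (-1 : ℝ) ^ (n + k - 1) * gasQ c α (n + k))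
        atTop (𝓝 S) ∧
      (-1 : ℝ) ^ (n - 1) * S = gasA c α n := by
  intro n hn
  obtain ⟨m, rfl⟩ := Nat.exists_eq_add_of_le' hn
  refine ⟨(-1) ^ m * gasA c α (m + 1), ?_, ?_⟩
  · have hA := (tendsto_add_atTop_iff_nat (m + 1)).2 (tendsto_gasA_atTop (α := α) hc)
    have hsum := (tendsto_sum_range_neg_one_pow_mul_add_succ hA).const_mul ((-1 : ℝ) ^ m)
    rw [zero_add] at hsum
    refine hsum.congr fun N => ?_
    rw [Finset.mul_sum]
    refine Finset.sum_congr rfl fun k _ => ?_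
    rw [show m + 1 + k = m + k + 1 by omega, gasQ_succ_eq_add, Nat.add_sub_cancel, pow_add]
    ring_nf
  · rw [Nat.add_sub_cancel, ← mul_assoc, ← pow_add, Even.neg_one_pow ⟨m, rfl⟩, one_mul]
end
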